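/- arXiv:1209.2502 — 2 statements merged into one kernel-verified Lean document; each statement's English description precedes it below -/
import Mathlib

section
/- Let Ψ be a subset-generating function, let A_0,…,A_n ∈ 𝔍, and let α_0,…,α_n ∈ [0,1] and β_0,…,β_n ∈ [0,1] be two weight sequences with ∑_{i=0}^n α_i = ∑_{i=0}^n β_i = 1. Then the distance between the two partition averages is bounded by the doubly averaged pairwise distances: d_μ(⊗_{i=0}^n α_i A_i, ⊗_{i=0}^n β_i A_i) ≤ ∑_{i=0}^n ∑_{j=0}^n α_i β_j · d_μ(A_i, A_j). -/
/-
Write `a χ = ∑ k ∈ χ, α k` and `b χ = ∑ k ∈ χ, β k`. Both averages are unions, over the nonempty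
`χ`, of the nested sets `Ψ (Ω χ) ·`, so their symmetric difference lies in the union of the
`Ψ (Ω χ) (a χ) ∆ Ψ (Ω χ) (b χ)`, of measures `|a χ - b χ| μ (Ω χ)`. As `∑ α = ∑ β = 1`,
`|a χ - b χ| ≤ a χ (1 - b χ) + (1 - a χ) b χ`, which is the sum of `α i β j` over the pairs
`(i, j)` separated by `χ`. Exchanging the sums, for a fixed pair `(i, j)` the disjoint `Ω χ` with
`χ` separating `i` and `j` all lie in `A i ∆ A j`.
-/

open MeasureTheory Set

noncomputable section

/-- Euclidean space ℝ^m. -/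
abbrev Em (m : ℕ) : Type := EuclideanSpace ℝ (Fin m)

/-- A bounded set whose topological boundary has Lebesgue measure zero
(bounded Jordan measurable set). -/
def JordanMeas {m : ℕ} (A : Set (Em m)) : Prop :=
  Bornology.IsBounded A ∧ volume (frontier A) = 0

/-- A bounded set equal to the closure of its interior (regular compact set). -/
def RegCompact {m : ℕ} (A : Set (Em m)) : Prop :=
  Bornology.IsBounded A ∧ A = closure (interior A)

/-- Membership in the collection 𝔍 of regular compact Jordan measurable sets. -/
def MemJ {m : ℕ} (A : Set (Em m)) : Prop :=
  RegCompact A ∧ JordanMeas A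

/-- The partition element Ω_χ = (⋂_{k∈χ} A_k) \ (⋃_{l∉χ} A_l). -/
def partElem {m n : ℕ} (A : Fin (n+1) → Set (Em m)) (χ : Finset (Fin (n+1))) : Set (Em m) :=
  (⋂ k ∈ χ, A k) \ (⋃ l ∈ χᶜ, A l)

/-- A subset-generating function Ψ. -/
structure SubsetGen (m : ℕ) where
  Ψ : Set (Em m) → ℝ → Set (Em m)
  subset : ∀ A t, JordanMeas A → 0 ≤ t → t ≤ 1 → Ψ A t ⊆ A
  memJ : ∀ A t, JordanMeas A → 0 ≤ t → t ≤ 1 → MemJ (Ψ A t)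
  meas : ∀ A t, JordanMeas A → 0 ≤ t → t ≤ 1 →
    volume (Ψ A t) = ENNReal.ofReal t * volume A
  mono : ∀ A s t, JordanMeas A → 0 ≤ s → s ≤ t → t ≤ 1 → Ψ A s ⊆ Ψ A t

/-- The partition average ⊗_{i=0}^n α_i A_i = ⋃_{∅≠χ⊆{0,…,n}} Ψ(Ω_χ, ∑_{k∈χ} α_k). -/
def partAvg {m n : ℕ} (S : SubsetGen m) (α : Fin (n+1) → ℝ)
    (A : Fin (n+1) → Set (Em m)) : Set (Em m) :=
  ⋃ χ ∈ {χ : Finset (Fin (n+1)) | χ.Nonempty}, S.Ψ (partElem A χ) (∑ k ∈ χ, α k)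

/-- The symmetric difference (pseudo)metric d_μ(A,B) = μ(A Δ B). -/
def dmu {m : ℕ} (A B : Set (Em m)) : ℝ :=
  (volume ((A \ B) ∪ (B \ A))).toReal

/-- The Bernstein weight b(n,x;i) = C(n,i)·x^i·(1−x)^{n−i}. -/
def bern (n i : ℕ) (x : ℝ) : ℝ :=
  (n.choose i : ℝ) * x ^ i * (1 - x) ^ (n - i)

/-- The set-valued Bernstein operator B_n(F,x) = ⊗_{i=0}^n b(n,x;i)·F(i/n). -/
def setBern {m : ℕ} (S : SubsetGen m) (F : ℝ → Set (Em m)) (n : ℕ) (x : ℝ) : Set (Em m) :=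
  partAvg S (fun i : Fin (n+1) => bern n (i : ℕ) x)
    (fun i : Fin (n+1) => F ((i : ℕ) / n))

open Function
open scoped symmDiff

theorem ENNReal.ofReal_sum_sum_of_nonneg {ι κ : Type*} {s : Finset ι} {t : Finset κ}
    {f : ι → κ → ℝ} (hf : ∀ i j, 0 ≤ f i j) :
    ENNReal.ofReal (∑ i ∈ s, ∑ j ∈ t, f i j) = ∑ i ∈ s, ∑ j ∈ t, ENNReal.ofReal (f i j) := by
  rw [ENNReal.ofReal_sum_of_nonneg fun i _ => Finset.sum_nonneg fun j _ => hf i j]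
  exact Finset.sum_congr rfl fun i _ => ENNReal.ofReal_sum_of_nonneg fun j _ => hf i j

theorem abs_sum_sub_sum_le_sum_xor {ι : Type*} [Fintype ι] [DecidableEq ι] {α β : ι → ℝ}
    (hα : ∀ i, 0 ≤ α i) (hβ : ∀ i, 0 ≤ β i) (hsα : ∑ i, α i = 1) (hsβ : ∑ i, β i = 1)
    (χ : Finset ι) :
    |∑ k ∈ χ, α k - ∑ k ∈ χ, β k| ≤
      ∑ i, ∑ j, if Xor (i ∈ χ) (j ∈ χ) then α i * β j else 0 := by
  have hinner (i : ι) : ∑ j, (if Xor (i ∈ χ) (j ∈ χ) then α i * β j else 0) =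
      α i * ∑ j ∈ if i ∈ χ then χᶜ else χ, β j := by
    rw [Finset.mul_sum, ← Finset.sum_filter]
    congr 1
    ext j
    split_ifs with hi <;> simp [Xor, hi]
  have hsplit : (∑ i, ∑ j, if Xor (i ∈ χ) (j ∈ χ) then α i * β j else 0) =
      (∑ i ∈ χ, α i) * (∑ j ∈ χᶜ, β j) + (∑ i ∈ χᶜ, α i) * (∑ j ∈ χ, β j) := by
    simp only [hinner, ← Finset.sum_add_sum_compl χ, Finset.sum_mul]
    congr 1 <;> refine Finset.sum_congr rfl fun i hi => ?_ <;> simp_all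
  rw [← Finset.sum_add_sum_compl χ] at hsα hsβ
  have hαχ := Finset.sum_nonneg fun i (_ : i ∈ χ) => hα i
  have hαχc := Finset.sum_nonneg fun i (_ : i ∈ χᶜ) => hα i
  have hβχ := Finset.sum_nonneg fun i (_ : i ∈ χ) => hβ i
  have hβχc := Finset.sum_nonneg fun i (_ : i ∈ χᶜ) => hβ i
  rw [hsplit, abs_le]
  constructor <;> nlinarith

theorem RegCompact.measurableSet {m : ℕ} {A : Set (Em m)} (hA : RegCompact A) :
    MeasurableSet A := by
  rw [hA.2]
  exact isClosed_closure.measurableSet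

theorem JordanMeas.volume_ne_top {m : ℕ} {A : Set (Em m)} (hA : JordanMeas A) :
    volume A ≠ ⊤ :=
  hA.1.measure_lt_top.ne

section partElem

variable {m n : ℕ} {A : Fin (n+1) → Set (Em m)} {χ : Finset (Fin (n+1))} {x : Em m}

theorem mem_partElem : x ∈ partElem A χ ↔ ∀ i, x ∈ A i ↔ i ∈ χ := by
  simp only [partElem, mem_sdiff, mem_iInter₂, mem_iUnion₂, Finset.mem_compl, not_exists]
  refine ⟨fun ⟨hin, hout⟩ i => ⟨fun hx => ?_, hin i⟩,
    fun h => ⟨fun i => (h i).2, fun i hi hx => hi ((h i).1 hx)⟩⟩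
  by_contra hi
  exact hout i hi hx

theorem partElem_eq_iInter (A : Fin (n+1) → Set (Em m)) (χ : Finset (Fin (n+1))) :
    partElem A χ = ⋂ i, if i ∈ χ then A i else (A i)ᶜ := by
  ext x
  simp only [mem_partElem, mem_iInter]
  refine forall_congr' fun i => ?_
  split_ifs with hi <;> simp [hi]

theorem pairwise_disjoint_partElem (A : Fin (n+1) → Set (Em m)) :
    Pairwise (Disjoint on (partElem A)) := by
  intro χ χ' hne
  refine Set.disjoint_left.2 fun x hx hx' => hne ?_
  ext i
  rw [← mem_partElem.1 hx i, mem_partElem.1 hx' i]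

theorem partElem_subset_symmDiff {i j : Fin (n+1)} (h : Xor (i ∈ χ) (j ∈ χ)) :
    partElem A χ ⊆ A i ∆ A j := by
  intro x hx
  rw [Set.mem_symmDiff, mem_partElem.1 hx i, mem_partElem.1 hx j]
  exact h

theorem frontier_partElem_subset (A : Fin (n+1) → Set (Em m)) (χ : Finset (Fin (n+1))) :
    frontier (partElem A χ) ⊆ ⋃ i, frontier (A i) := by
  rw [partElem_eq_iInter]
  rintro x ⟨hcl, hint⟩
  rw [interior_iInter_of_finite, mem_iInter, not_forall] at hint
  obtain ⟨i, hi⟩ := hint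
  refine mem_iUnion.2 ⟨i, ?_⟩
  have hx : x ∈ frontier (if i ∈ χ then A i else (A i)ᶜ) :=
    ⟨closure_mono (iInter_subset _ i) hcl, hi⟩
  split_ifs at hx
  · exact hx
  · rwa [frontier_compl] at hx

theorem partElem_jordanMeas (hA : ∀ i, JordanMeas (A i)) (hχ : χ.Nonempty) :
    JordanMeas (partElem A χ) := by
  obtain ⟨k, hk⟩ := hχ
  refine ⟨(hA k).1.subset fun x hx => (mem_partElem.1 hx k).2 hk, ?_⟩
  exact measure_mono_null (frontier_partElem_subset A χ) (measure_iUnion_null fun i => (hA i).2)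

theorem measurableSet_partElem (hA : ∀ i, MeasurableSet (A i)) :
    MeasurableSet (partElem A χ) := by
  rw [partElem_eq_iInter]
  refine MeasurableSet.iInter fun i => ?_
  split_ifs
  exacts [hA i, (hA i).compl]

theorem sum_volume_partElem_le_volume_symmDiff (hA : ∀ i, MeasurableSet (A i))
    (s : Finset (Finset (Fin (n+1)))) (i j : Fin (n+1)) :
    ∑ χ ∈ s with Xor (i ∈ χ) (j ∈ χ), volume (partElem A χ) ≤ volume (A i ∆ A j) := by
  rw [← measure_biUnion_finset (fun χ _ χ' _ hne => pairwise_disjoint_partElem A hne)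
    fun χ _ => measurableSet_partElem hA]
  exact measure_mono (iUnion₂_subset fun χ hχ =>
    partElem_subset_symmDiff (Finset.mem_filter.1 hχ).2)

end partElem

namespace SubsetGen

variable {m : ℕ} (S : SubsetGen m) {Ω : Set (Em m)}

theorem volume_sdiff (hΩ : JordanMeas Ω) {s t : ℝ} (hs : 0 ≤ s) (hst : s ≤ t) (ht : t ≤ 1) :
    volume (S.Ψ Ω t \ S.Ψ Ω s) = ENNReal.ofReal (t - s) * volume Ω := by
  have hs1 : s ≤ 1 := hst.trans ht
  have ht0 : 0 ≤ t := hs.trans hst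
  rw [measure_sdiff (S.mono _ _ _ hΩ hs hst ht)
      (S.memJ _ _ hΩ hs hs1).1.measurableSet.nullMeasurableSet
      (measure_ne_top_of_subset (S.subset _ _ hΩ hs hs1) hΩ.volume_ne_top),
    S.meas _ _ hΩ ht0 ht, S.meas _ _ hΩ hs hs1, ENNReal.ofReal_sub _ hs,
    ENNReal.sub_mul fun _ _ => hΩ.volume_ne_top]

theorem volume_symmDiff (hΩ : JordanMeas Ω) {s t : ℝ} (hs : s ∈ Icc (0:ℝ) 1)
    (ht : t ∈ Icc (0:ℝ) 1) :
    volume (S.Ψ Ω s ∆ S.Ψ Ω t) = ENNReal.ofReal |s - t| * volume Ω := by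
  rcases le_total s t with hst | hts
  · rw [symmDiff_of_le (S.mono _ _ _ hΩ hs.1 hst ht.2), S.volume_sdiff hΩ hs.1 hst ht.2,
      abs_sub_comm, abs_of_nonneg (sub_nonneg.2 hst)]
  · rw [symmDiff_of_ge (S.mono _ _ _ hΩ ht.1 hts hs.2), S.volume_sdiff hΩ ht.1 hts hs.2,
      abs_of_nonneg (sub_nonneg.2 hts)]

end SubsetGen

theorem partAvg_symmDiff_subset {m n : ℕ} (S : SubsetGen m) (α β : Fin (n+1) → ℝ)
    (A : Fin (n+1) → Set (Em m)) :
    partAvg S α A ∆ partAvg S β A ⊆ ⋃ χ ∈ Finset.univ.filter Finset.Nonempty,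
      S.Ψ (partElem A χ) (∑ k ∈ χ, α k) ∆ S.Ψ (partElem A χ) (∑ k ∈ χ, β k) := by
  intro x hx
  simpa using (iUnion_symmDiff_iUnion_subset.trans
    (iUnion_mono fun χ => iUnion_symmDiff_iUnion_subset)) hx

theorem volume_partAvg_symmDiff_le {m n : ℕ} (S : SubsetGen m) {A : Fin (n+1) → Set (Em m)}
    (hA : ∀ i, MemJ (A i)) {α β : Fin (n+1) → ℝ} (hα : ∀ i, 0 ≤ α i) (hβ : ∀ i, 0 ≤ β i)
    (hsα : ∑ i, α i = 1) (hsβ : ∑ i, β i = 1) :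
    volume (partAvg S α A ∆ partAvg S β A) ≤
      ∑ i, ∑ j, ENNReal.ofReal (α i * β j) * volume (A i ∆ A j) := by
  have hmem {γ : Fin (n+1) → ℝ} (hγ : ∀ i, 0 ≤ γ i) (hsγ : ∑ i, γ i = 1)
      (χ : Finset (Fin (n+1))) : ∑ k ∈ χ, γ k ∈ Icc (0:ℝ) 1 :=
    ⟨Finset.sum_nonneg fun i _ => hγ i,
      hsγ ▸ Finset.sum_le_univ_sum_of_nonneg fun i => hγ i⟩
  have hcoef (χ : Finset (Fin (n+1))) : ENNReal.ofReal |∑ k ∈ χ, α k - ∑ k ∈ χ, β k| ≤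
      ∑ i, ∑ j, if Xor (i ∈ χ) (j ∈ χ) then ENNReal.ofReal (α i * β j) else 0 := by
    refine (ENNReal.ofReal_le_ofReal (abs_sum_sub_sum_le_sum_xor hα hβ hsα hsβ χ)).trans_eq ?_
    rw [ENNReal.ofReal_sum_sum_of_nonneg fun i j =>
      ite_nonneg (mul_nonneg (hα i) (hβ j)) le_rfl]
    simp only [apply_ite ENNReal.ofReal, ENNReal.ofReal_zero]
  calc volume (partAvg S α A ∆ partAvg S β A)
      ≤ ∑ χ ∈ Finset.univ.filter Finset.Nonempty,
          volume (S.Ψ (partElem A χ) (∑ k ∈ χ, α k) ∆ S.Ψ (partElem A χ) (∑ k ∈ χ, β k)) :=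
        (measure_mono (partAvg_symmDiff_subset S α β A)).trans (measure_biUnion_finset_le _ _)
    _ = ∑ χ ∈ Finset.univ.filter Finset.Nonempty,
          ENNReal.ofReal |∑ k ∈ χ, α k - ∑ k ∈ χ, β k| * volume (partElem A χ) := by
        refine Finset.sum_congr rfl fun χ hχ => S.volume_symmDiff ?_ (hmem hα hsα χ) (hmem hβ hsβ χ)
        exact partElem_jordanMeas (fun i => (hA i).2) (Finset.mem_filter.1 hχ).2
    _ ≤ ∑ χ ∈ Finset.univ.filter Finset.Nonempty,
          (∑ i, ∑ j, if Xor (i ∈ χ) (j ∈ χ) then ENNReal.ofReal (α i * β j) else 0) *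
            volume (partElem A χ) := by
        gcongr with χ
        exact hcoef χ
    _ = ∑ i, ∑ j, ENNReal.ofReal (α i * β j) *
          ∑ χ ∈ Finset.univ.filter Finset.Nonempty with Xor (i ∈ χ) (j ∈ χ),
            volume (partElem A χ) := by
        simp only [Finset.sum_mul, ite_mul, zero_mul, Finset.mul_sum]
        rw [Finset.sum_comm]
        refine Finset.sum_congr rfl fun i _ => ?_
        rw [Finset.sum_comm]
        exact Finset.sum_congr rfl fun j _ => (Finset.sum_filter _ _).symm
    _ ≤ ∑ i, ∑ j, ENNReal.ofReal (α i * β j) * volume (A i ∆ A j) := by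
        gcongr with i _ j _
        exact sum_volume_partElem_le_volume_symmDiff (fun i => (hA i).1.measurableSet) _ i j

theorem dmu_eq_measureReal_symmDiff {m : ℕ} (A B : Set (Em m)) :
    dmu A B = volume.real (A ∆ B) :=
  rfl

/-- d_μ(⊗ α_i A_i, ⊗ β_i A_i) ≤ ∑_i ∑_j α_i β_j d_μ(A_i, A_j). -/
theorem stmt_9 {m n : ℕ} (S : SubsetGen m) (A : Fin (n+1) → Set (Em m))
    (hA : ∀ i, MemJ (A i)) (α β : Fin (n+1) → ℝ)
    (hα : ∀ i, α i ∈ Set.Icc (0:ℝ) 1) (hβ : ∀ i, β i ∈ Set.Icc (0:ℝ) 1)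
    (hsα : ∑ i, α i = 1) (hsβ : ∑ i, β i = 1) :
    dmu (partAvg S α A) (partAvg S β A) ≤
      ∑ i, ∑ j, α i * β j * dmu (A i) (A j) := by
  have hαβ (i j : Fin (n+1)) : 0 ≤ α i * β j := mul_nonneg (hα i).1 (hβ j).1
  have hfin (i j : Fin (n+1)) : volume (A i ∆ A j) ≠ ⊤ :=
    (((hA i).2.1.union (hA j).2.1).subset symmDiff_subset_union).measure_lt_top.ne
  have hterm (i j : Fin (n+1)) : 0 ≤ α i * β j * dmu (A i) (A j) :=
    mul_nonneg (hαβ i j) ENNReal.toReal_nonneg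
  have hle := volume_partAvg_symmDiff_le S hA (fun i => (hα i).1) (fun i => (hβ i).1) hsα hsβ
  refine ENNReal.toReal_le_of_le_ofReal
    (Finset.sum_nonneg fun i _ => Finset.sum_nonneg fun j _ => hterm i j) (hle.trans_eq ?_)
  rw [ENNReal.ofReal_sum_sum_of_nonneg hterm]
  refine Finset.sum_congr rfl fun i _ => Finset.sum_congr rfl fun j _ => ?_
  rw [ENNReal.ofReal_mul (hαβ i j), dmu_eq_measureReal_symmDiff, ofReal_measureReal (hfin i j)]
end
end

section
/- (Kac) Let L > 0, 0 < ν ≤ 1, and let f : [0,1] → ℝ satisfy |f(x) − f(y)| ≤ L·|x−y|^ν for all x, y ∈ [0,1]. Then for every n ≥ 1 and every x ∈ [0,1], the Bernstein polynomial B_n(f,x) = ∑_{i=0}^n b(n,x;i)·f(i/n) satisfies |f(x) − B_n(f,x)| ≤ L·(x(1−x)/n)^{ν/2}. -/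
open MeasureTheory Set

noncomputable section

/-!
The Bernstein weights `bern n i x` form a probability distribution on the nodes `i / n` with
mean `x` and variance `x (1 - x) / n`. For any such average, the Hölder bound and Jensen's
inequality for the concave `t ↦ t ^ (ν / 2)` bound the error by `L` times the variance to the
power `ν / 2`.
-/

section WeightedMean

variable {ι : Type*} {s : Finset ι} {w : ι → ℝ}

theorem abs_sub_sum_mul_le_sum_mul_abs_sub (hw : ∀ i ∈ s, 0 ≤ w i) (hw₁ : ∑ i ∈ s, w i = 1)
    (a : ℝ) (b : ι → ℝ) :
    |a - ∑ i ∈ s, w i * b i| ≤ ∑ i ∈ s, w i * |a - b i| := by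
  have hsplit : a - ∑ i ∈ s, w i * b i = ∑ i ∈ s, w i * (a - b i) := by
    simp only [mul_sub, Finset.sum_sub_distrib, ← Finset.sum_mul, hw₁, one_mul]
  rw [hsplit]
  refine (Finset.abs_sum_le_sum_abs _ _).trans (Finset.sum_le_sum fun i hi => ?_)
  rw [abs_mul, abs_of_nonneg (hw i hi)]

/-- The power-mean inequality with exponent `2 / ν ≥ 1`, applied to `|d i| ^ ν`. -/
theorem sum_mul_abs_rpow_le_sum_mul_sq_rpow (hw : ∀ i ∈ s, 0 ≤ w i) (hw₁ : ∑ i ∈ s, w i = 1)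
    {ν : ℝ} (hν₀ : 0 < ν) (hν₁ : ν ≤ 1) (d : ι → ℝ) :
    ∑ i ∈ s, w i * |d i| ^ ν ≤ (∑ i ∈ s, w i * d i ^ 2) ^ (ν / 2) := by
  have hp : 1 ≤ 2 / ν := by rw [le_div_iff₀ hν₀]; linarith
  have hsq : ∀ i, (|d i| ^ ν) ^ (2 / ν) = d i ^ 2 := fun i => by
    rw [← Real.rpow_mul (abs_nonneg _), mul_div_cancel₀ _ hν₀.ne', Real.rpow_two, sq_abs]
  have := Real.arith_mean_le_rpow_mean s w (fun i => |d i| ^ ν) hw hw₁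
    (fun i _ => Real.rpow_nonneg (abs_nonneg _) ν) hp
  simpa only [hsq, one_div_div] using this

theorem abs_sub_sum_mul_le_of_holder {D : Set ℝ} {f : ℝ → ℝ} {L ν : ℝ} (hL : 0 ≤ L)
    (hν₀ : 0 < ν) (hν₁ : ν ≤ 1) (hf : ∀ x ∈ D, ∀ y ∈ D, |f x - f y| ≤ L * |x - y| ^ ν)
    {x : ℝ} (hx : x ∈ D) {t : ι → ℝ} (ht : ∀ i ∈ s, t i ∈ D)
    (hw : ∀ i ∈ s, 0 ≤ w i) (hw₁ : ∑ i ∈ s, w i = 1) :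
    |f x - ∑ i ∈ s, w i * f (t i)| ≤ L * (∑ i ∈ s, w i * (x - t i) ^ 2) ^ (ν / 2) :=
  calc |f x - ∑ i ∈ s, w i * f (t i)|
      ≤ ∑ i ∈ s, w i * |f x - f (t i)| := abs_sub_sum_mul_le_sum_mul_abs_sub hw hw₁ _ _
    _ ≤ ∑ i ∈ s, w i * (L * |x - t i| ^ ν) :=
        Finset.sum_le_sum fun i hi => mul_le_mul_of_nonneg_left (hf x hx _ (ht i hi)) (hw i hi)
    _ = L * ∑ i ∈ s, w i * |x - t i| ^ ν := by
        rw [Finset.mul_sum]; exact Finset.sum_congr rfl fun i _ => by ring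
    _ ≤ L * (∑ i ∈ s, w i * (x - t i) ^ 2) ^ (ν / 2) :=
        mul_le_mul_of_nonneg_left (sum_mul_abs_rpow_le_sum_mul_sq_rpow hw hw₁ hν₀ hν₁ _) hL

end WeightedMean

section Bernstein

variable {n : ℕ} {x : ℝ}

theorem bern_eq_bernstein (i : ℕ) (hx : x ∈ Set.Icc (0 : ℝ) 1) :
    bern n i x = bernstein n i ⟨x, hx⟩ := by
  simp [bern, bernstein_apply]

theorem bern_nonneg (i : ℕ) (hx : x ∈ Set.Icc (0 : ℝ) 1) : 0 ≤ bern n i x := by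
  rw [bern_eq_bernstein i hx]
  exact bernstein_nonneg

theorem sum_bern (n : ℕ) (x : ℝ) : ∑ i ∈ Finset.range (n + 1), bern n i x = 1 := by
  have := (add_pow x (1 - x) n).symm
  simp only [add_sub_cancel, one_pow] at this
  rw [← this]
  exact Finset.sum_congr rfl fun i _ => by rw [bern]; ring

theorem sum_bern_mul_sub_div_sq (hn : n ≠ 0) (hx : x ∈ Set.Icc (0 : ℝ) 1) :
    ∑ i ∈ Finset.range (n + 1), bern n i x * (x - (i : ℝ) / n) ^ 2 = x * (1 - x) / n := by
  have := bernstein.variance hn ⟨x, hx⟩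
  simp only [bernstein.z] at this
  rw [Finset.sum_range, ← this]
  exact Finset.sum_congr rfl fun i _ => by rw [bern_eq_bernstein _ hx, mul_comm]

end Bernstein

/-- Kac: for f ∈ Lip(L,ν) on [0,1],
|f(x) − B_n(f,x)| ≤ L (x(1−x)/n)^{ν/2}. -/
theorem stmt_19 (L ν : ℝ) (hL : 0 < L) (hν0 : 0 < ν) (hν1 : ν ≤ 1)
    (f : ℝ → ℝ)
    (hf : ∀ x ∈ Set.Icc (0:ℝ) 1, ∀ y ∈ Set.Icc (0:ℝ) 1,
      |f x - f y| ≤ L * |x - y| ^ ν)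
    (n : ℕ) (hn : 1 ≤ n) (x : ℝ) (hx : x ∈ Set.Icc (0:ℝ) 1) :
    |f x - ∑ i ∈ Finset.range (n+1), bern n i x * f ((i : ℝ) / n)| ≤
      L * (x * (1 - x) / (n : ℝ)) ^ (ν / 2) := by
  have hnodes : ∀ i ∈ Finset.range (n + 1), (i : ℝ) / n ∈ Set.Icc (0 : ℝ) 1 := fun i hi =>
    ⟨by positivity, div_le_one_of_le₀ (by exact_mod_cast Finset.mem_range_succ_iff.mp hi)
      (Nat.cast_nonneg n)⟩
  rw [← sum_bern_mul_sub_div_sq (by omega) hx]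
  exact abs_sub_sum_mul_le_of_holder hL.le hν0 hν1 hf hx hnodes
    (fun i _ => bern_nonneg i hx) (sum_bern n x)
end
end
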